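/- arXiv:1509.07206 — 4 statements merged into one kernel-verified Lean document; each statement's English description precedes it below -/
import Mathlib

section
/- Alternating-color technique, direction 1: let φ be a cPLTL formula with no parameterized always operators (a cPLTL_F formula), let w be a cost-trace with (w,α) ⊨ φ for some valuation α, and let k = max over the variables x of φ of α(x). Then for every (k+1)-spaced coloring w′ of w, we have w′ ⊨ rel(φ), where rel(φ) is the LTL formula obtained by recursively replacing each subformula F_{≤x}ψ of φ by (p → p U (¬p U rel(ψ))) ∧ (¬p → ¬p U (p U rel(ψ))). -/
inductive cPLTL (P V : Type) : Type
  | pos (p : P)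
  | neg (p : P)
  | and (φ ψ : cPLTL P V)
  | or (φ ψ : cPLTL P V)
  | next (φ : cPLTL P V)
  | until_ (φ ψ : cPLTL P V)
  | release (φ ψ : cPLTL P V)
  | fle (z : V) (φ : cPLTL P V)
  | gle (z : V) (φ : cPLTL P V)

def cost (c : ℕ → ℕ) (n j : ℕ) : ℕ := ∑ k ∈ Finset.range j, c (n + k)

def Sat {P V : Type} (w : ℕ → Set P) (c : ℕ → ℕ) (α : V → ℕ) : cPLTL P V → ℕ → Prop
  | .pos p, n => p ∈ w n
  | .neg p, n => p ∉ w n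
  | .and φ ψ, n => Sat w c α φ n ∧ Sat w c α ψ n
  | .or φ ψ, n => Sat w c α φ n ∨ Sat w c α ψ n
  | .next φ, n => Sat w c α φ (n + 1)
  | .until_ φ ψ, n => ∃ j, Sat w c α ψ (n + j) ∧ ∀ k < j, Sat w c α φ (n + k)
  | .release φ ψ, n => ∀ j, Sat w c α ψ (n + j) ∨ ∃ k < j, Sat w c α φ (n + k)
  | .fle z φ, n => ∃ j, cost c n j ≤ α z ∧ Sat w c α φ (n + j)
  | .gle z φ, n => ∀ j, cost c n j ≤ α z → Sat w c α φ (n + j)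

/-- φ contains no parameterized always operator (cPLTL_F formulas). -/
def cPLTL.NoG {P V : Type} : cPLTL P V → Prop
  | .pos _ => True
  | .neg _ => True
  | .and φ ψ => φ.NoG ∧ ψ.NoG
  | .or φ ψ => φ.NoG ∧ ψ.NoG
  | .next φ => φ.NoG
  | .until_ φ ψ => φ.NoG ∧ ψ.NoG
  | .release φ ψ => φ.NoG ∧ ψ.NoG
  | .fle _ φ => φ.NoG
  | .gle _ _ => False

/-- Atomic propositions occurring in a formula. -/
def cPLTL.atoms {P V : Type} : cPLTL P V → Set P
  | .pos p => {p}
  | .neg p => {p}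
  | .and φ ψ => φ.atoms ∪ ψ.atoms
  | .or φ ψ => φ.atoms ∪ ψ.atoms
  | .next φ => φ.atoms
  | .until_ φ ψ => φ.atoms ∪ ψ.atoms
  | .release φ ψ => φ.atoms ∪ ψ.atoms
  | .fle _ φ => φ.atoms
  | .gle _ φ => φ.atoms

/-- The relativization rel(φ) w.r.t. the fresh proposition p: replace every
subformula F_{≤x}ψ by (p → p U (¬p U rel ψ)) ∧ (¬p → ¬p U (p U rel ψ)). -/
def rel {P V : Type} (p : P) : cPLTL P V → cPLTL P V
  | .pos q => .pos q
  | .neg q => .neg q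
  | .and φ ψ => .and (rel p φ) (rel p ψ)
  | .or φ ψ => .or (rel p φ) (rel p ψ)
  | .next φ => .next (rel p φ)
  | .until_ φ ψ => .until_ (rel p φ) (rel p ψ)
  | .release φ ψ => .release (rel p φ) (rel p ψ)
  | .fle _ ψ => .and
      (.or (.neg p) (.until_ (.pos p) (.until_ (.neg p) (rel p ψ))))
      (.or (.pos p) (.until_ (.neg p) (.until_ (.pos p) (rel p ψ))))
  | .gle z ψ => .gle z (rel p ψ)

/-- w' is a coloring of w with the fresh proposition p: same costs
(built in, as both share the cost sequence c) and same truth values on P \ {p}. -/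
def Coloring {P : Type} (p : P) (w w' : ℕ → Set P) : Prop :=
  ∀ n, w' n \ {p} = w n \ {p}

/-- n is a changepoint of the coloring w' (w.r.t. p). -/
def Changepoint {P : Type} (p : P) (w' : ℕ → Set P) (n : ℕ) : Prop :=
  n = 0 ∨ ¬ ((p ∈ w' (n - 1)) ↔ (p ∈ w' n))

/-- m and m' are successive changepoints of w'. -/
def SuccessiveCP {P : Type} (p : P) (w' : ℕ → Set P) (m m' : ℕ) : Prop :=
  m < m' ∧ Changepoint p w' m ∧ Changepoint p w' m' ∧
    ∀ i, m < i → i < m' → ¬ Changepoint p w' i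

/-- The coloring w' (with costs c) is k-spaced: every block, i.e. every infix
w'_m c_m ⋯ w'_{m'-1} between successive changepoints m and m', has cost at least k. -/
def Spaced {P : Type} (p : P) (w' : ℕ → Set P) (c : ℕ → ℕ) (k : ℕ) : Prop :=
  ∀ m m', SuccessiveCP p w' m m' → k ≤ cost c m (m' - 1 - m)

/-- The coloring w' (with costs c) is k-bounded: every block has cost at most k,
and if there is a last changepoint, the tail starting there has cost at most k. -/
def Bounded {P : Type} (p : P) (w' : ℕ → Set P) (c : ℕ → ℕ) (k : ℕ) : Prop :=
  (∀ m m', SuccessiveCP p w' m m' → cost c m (m' - 1 - m) ≤ k) ∧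
  (∀ m, Changepoint p w' m → (∀ i, m < i → ¬ Changepoint p w' i) →
    ∀ j, cost c m j ≤ k)

/-- Variables parameterizing eventually operators, as a finset. -/
def cPLTL.varFs {P V : Type} [DecidableEq V] : cPLTL P V → Finset V
  | .pos _ => ∅
  | .neg _ => ∅
  | .and φ ψ => φ.varFs ∪ ψ.varFs
  | .or φ ψ => φ.varFs ∪ ψ.varFs
  | .next φ => φ.varFs
  | .until_ φ ψ => φ.varFs ∪ ψ.varFs
  | .release φ ψ => φ.varFs ∪ ψ.varFs
  | .fle z φ => insert z φ.varFs
  | .gle _ φ => φ.varFs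


/-! In a `(k+1)`-spaced coloring, an infix of cost at most `k` contains at most one changepoint
after its first position. So if `F_{≤x} ψ` holds at `n` with a witness reached at cost
`α x ≤ k`, the colour of `p` switches at most once on the way to the witness, which is exactly
what `p U (¬p U rel ψ)` (resp. `¬p U (p U rel ψ)`) expresses. All other operators commute with
`rel`, and literals keep their truth values because the coloring only changes the fresh `p`. -/

section Coloring

variable {P V : Type} {p : P} {w w' : ℕ → Set P} {c : ℕ → ℕ} {k n j : ℕ}

lemma cost_le_cost {m i : ℕ} (hnm : n ≤ m) (hmi : m + i ≤ n + j) : cost c m i ≤ cost c n j := by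
  have sum_Ico : ∀ a b, cost c a b = ∑ t ∈ Finset.Ico a (a + b), c t := fun a b => by
    simp [cost, Finset.sum_Ico_eq_sum_range]
  rw [sum_Ico, sum_Ico]
  exact Finset.sum_le_sum_of_subset fun t ht => by
    simp only [Finset.mem_Ico] at ht ⊢
    omega

lemma Coloring.mem_iff_of_ne (hcol : Coloring p w w') {q : P} (hq : q ≠ p) (n : ℕ) :
    q ∈ w' n ↔ q ∈ w n := by
  simpa [hq] using Set.ext_iff.1 (hcol n) q

lemma mem_iff_of_forall_not_changepoint {a b t : ℕ}
    (h : ∀ i, a < i → i ≤ b → ¬ Changepoint p w' i) (hat : a ≤ t) (htb : t ≤ b) :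
    p ∈ w' t ↔ p ∈ w' a := by
  induction t, hat using Nat.le_induction with
  | base => rfl
  | succ t hat ih =>
    have hstep := h (t + 1) (by omega) htb
    simp only [Changepoint, not_or, Nat.add_sub_cancel, not_not] at hstep
    exact hstep.2.symm.trans (ih (by omega))

lemma Spaced.changepoint_eq (hspaced : Spaced p w' c (k + 1)) (hcost : cost c n j ≤ k)
    {i i' : ℕ} (hni : n < i) (hii' : i ≤ i') (hi'j : i' ≤ n + j)
    (hi : Changepoint p w' i) (hi' : Changepoint p w' i') : i = i' := by
  classical
  by_contra hne
  have hnext : ∃ t, i < t ∧ Changepoint p w' t := ⟨i', by omega, hi'⟩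
  obtain ⟨hlt, hcp⟩ := Nat.find_spec hnext
  have hle : Nat.find hnext ≤ i' := Nat.find_min' hnext ⟨by omega, hi'⟩
  have hblock : SuccessiveCP p w' i (Nat.find hnext) :=
    ⟨hlt, hi, hcp, fun t hit htm ht => Nat.find_min hnext htm ⟨hit, ht⟩⟩
  have hblock_cost : cost c i (Nat.find hnext - 1 - i) ≤ cost c n j :=
    cost_le_cost hni.le (by omega)
  have := hspaced _ _ hblock
  omega

lemma Spaced.exists_switch (hspaced : Spaced p w' c (k + 1)) (hcost : cost c n j ≤ k) :
    ∃ s, n ≤ s ∧ s ≤ n + j ∧ (∀ t, n ≤ t → t < s → (p ∈ w' t ↔ p ∈ w' n)) ∧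
      ∀ t, s ≤ t → t < n + j → ¬ (p ∈ w' t ↔ p ∈ w' n) := by
  classical
  by_cases h : ∃ i, n < i ∧ i ≤ n + j ∧ Changepoint p w' i
  swap
  · push Not at h
    exact ⟨n + j, by omega, le_rfl,
      fun t hnt htj => mem_iff_of_forall_not_changepoint h hnt htj.le, fun t hst htj => by omega⟩
  obtain ⟨hns, hsj, hs⟩ := Nat.find_spec h
  have before : ∀ t, n ≤ t → t < Nat.find h → (p ∈ w' t ↔ p ∈ w' n) :=
    fun t hnt hts => mem_iff_of_forall_not_changepoint
      (fun i hni hit hi => Nat.find_min h (by omega) ⟨hni, by omega, hi⟩) hnt le_rfl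
  have after : ∀ t, Nat.find h ≤ t → t ≤ n + j → (p ∈ w' t ↔ p ∈ w' (Nat.find h)) :=
    fun _ => mem_iff_of_forall_not_changepoint fun i hsi hij hi =>
      hsi.ne (hspaced.changepoint_eq hcost hns hsi.le hij hs hi)
  have flip : ¬ (p ∈ w' (Nat.find h) ↔ p ∈ w' n) := by
    rcases hs with hs | hs
    · omega
    · rw [before _ (by omega) (by omega)] at hs
      exact mt Iff.symm hs
  exact ⟨Nat.find h, hns.le, hsj, before,
    fun t hst htj => by rwa [after t hst htj.le]⟩

lemma sat_until_of_forall {α : V → ℕ} {φ ψ : cPLTL P V} {m : ℕ} (hnm : n ≤ m)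
    (hφ : ∀ t, n ≤ t → t < m → Sat w c α φ t) (hψ : Sat w c α ψ m) :
    Sat w c α (.until_ φ ψ) n :=
  ⟨m - n, by rwa [Nat.add_sub_cancel' hnm], fun i hi => hφ (n + i) (by omega) (by omega)⟩

lemma Spaced.sat_rel_fle (hspaced : Spaced p w' c (k + 1)) (hcost : cost c n j ≤ k)
    {β : V → ℕ} {z : V} {ψ : cPLTL P V} (hψ : Sat w' c β (rel p ψ) (n + j)) :
    Sat w' c β (rel p (.fle z ψ)) n := by
  obtain ⟨s, hns, hsj, before, after⟩ := hspaced.exists_switch hcost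
  have switch_once : ∀ ψ₁ ψ₂ : cPLTL P V,
      (∀ t, Sat w' c β ψ₁ t ↔ (p ∈ w' t ↔ p ∈ w' n)) →
      (∀ t, Sat w' c β ψ₂ t ↔ ¬ (p ∈ w' t ↔ p ∈ w' n)) →
      Sat w' c β (.until_ ψ₁ (.until_ ψ₂ (rel p ψ))) n :=
    fun ψ₁ ψ₂ h₁ h₂ => sat_until_of_forall hns (fun t hnt hts => (h₁ t).2 (before t hnt hts))
      (sat_until_of_forall hsj (fun t hst htj => (h₂ t).2 (after t hst htj)) hψ)
  by_cases hp : p ∈ w' n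
  · exact ⟨.inr (switch_once (.pos p) (.neg p) (by simp [Sat, hp]) (by simp [Sat, hp])), .inl hp⟩
  · exact ⟨.inl hp, .inr (switch_once (.neg p) (.pos p) (by simp [Sat, hp]) (by simp [Sat, hp]))⟩

lemma sat_rel_of_sat [DecidableEq V] (hcol : Coloring p w w') (hspaced : Spaced p w' c (k + 1))
    {α : V → ℕ} (β : V → ℕ) {φ : cPLTL P V} (hNoG : φ.NoG) (hp : p ∉ φ.atoms)
    (hk : φ.varFs.sup α ≤ k) (hsat : Sat w c α φ n) : Sat w' c β (rel p φ) n := by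
  induction φ generalizing n with
  | pos q => exact (hcol.mem_iff_of_ne (Ne.symm hp) n).2 hsat
  | neg q => exact mt (hcol.mem_iff_of_ne (Ne.symm hp) n).1 hsat
  | and φ ψ ihφ ihψ =>
    simp only [cPLTL.varFs, Finset.sup_union, sup_le_iff] at hk
    exact ⟨ihφ hNoG.1 (hp <| .inl ·) hk.1 hsat.1, ihψ hNoG.2 (hp <| .inr ·) hk.2 hsat.2⟩
  | or φ ψ ihφ ihψ =>
    simp only [cPLTL.varFs, Finset.sup_union, sup_le_iff] at hk
    exact hsat.imp (ihφ hNoG.1 (hp <| .inl ·) hk.1) (ihψ hNoG.2 (hp <| .inr ·) hk.2)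
  | next φ ih => exact ih hNoG hp hk hsat
  | until_ φ ψ ihφ ihψ =>
    simp only [cPLTL.varFs, Finset.sup_union, sup_le_iff] at hk
    obtain ⟨j, hj, hlt⟩ := hsat
    exact ⟨j, ihψ hNoG.2 (hp <| .inr ·) hk.2 hj,
      fun i hi => ihφ hNoG.1 (hp <| .inl ·) hk.1 (hlt i hi)⟩
  | release φ ψ ihφ ihψ =>
    simp only [cPLTL.varFs, Finset.sup_union, sup_le_iff] at hk
    exact fun j => (hsat j).imp (ihψ hNoG.2 (hp <| .inr ·) hk.2)
      fun ⟨i, hi, h⟩ => ⟨i, hi, ihφ hNoG.1 (hp <| .inl ·) hk.1 h⟩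
  | fle z ψ ih =>
    simp only [cPLTL.varFs, Finset.sup_insert, sup_le_iff] at hk
    obtain ⟨j, hj, hψ⟩ := hsat
    exact hspaced.sat_rel_fle (hj.trans hk.1) (ih hNoG hp hk.2 hψ)
  | gle => exact hNoG.elim

end Coloring

theorem altcolor_dir1_general {P V : Type} [DecidableEq V] (p : P) (φ : cPLTL P V)
    (hNoG : φ.NoG) (hfresh : p ∉ φ.atoms)
    (w : ℕ → Set P) (c : ℕ → ℕ) (α : V → ℕ)
    (hsat : Sat w c α φ 0)
    (k : ℕ) (hk : k = φ.varFs.sup α)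
    (w' : ℕ → Set P) (hcol : Coloring p w w') (hspaced : Spaced p w' c (k + 1)) :
    ∀ β : V → ℕ, Sat w' c β (rel p φ) 0 :=
  fun β => sat_rel_of_sat hcol hspaced β hNoG hfresh hk.ge hsat

/-- Alternating-color technique, direction 1. -/
theorem altcolor_dir1 {P V : Type} [DecidableEq V] (p : P) (φ : cPLTL P V)
    (hNoG : φ.NoG) (hfresh : p ∉ φ.atoms)
    (w : ℕ → Set P) (hw : ∀ n, p ∉ w n) (c : ℕ → ℕ) (α : V → ℕ)
    (hsat : Sat w c α φ 0)
    (k : ℕ) (hk : k = φ.varFs.sup α)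
    (w' : ℕ → Set P) (hcol : Coloring p w w') (hspaced : Spaced p w' c (k + 1)) :
    ∀ β : V → ℕ, Sat w' c β (rel p φ) 0 :=
  altcolor_dir1_general p φ hNoG hfresh w c α hsat k hk w' hcol hspaced
end

section
/- For every cost-trace w satisfying the κ-condition, every position n, and every valuation α: (w,n,α) ⊨ F_{>y}φ if and only if there exists j ≥ 0 with Σ_{k=n}^{n+j-1} cₖ > α(y) and (w,n+j,α) ⊨ φ, where F_{>y}φ is defined as the formula G_{≤y} F X (κ ∧ F φ). -/
/-- tt := κ ∨ ¬κ, Fψ := tt U ψ. -/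
def Fm {P V : Type} (κ : P) (ψ : cPLTL P V) : cPLTL P V :=
  .until_ (.or (.pos κ) (.neg κ)) ψ

/-- F_{>y}φ := G_{≤y} F X (κ ∧ F φ). -/
def FGt {P V : Type} (κ : P) (y : V) (φ : cPLTL P V) : cPLTL P V :=
  .gle y (Fm κ (.next (.and (.pos κ) (Fm κ φ))))

/-!
By the κ-condition, `κ` holds at position `k + 1` exactly when step `k` has positive cost, so
`F_{>y} φ` says: from every offset `j` whose accumulated cost is at most `α y` there is a later
positive-cost step followed by `φ`. If `φ` holds past the budget, the step where the budget is
crossed serves every such `j`. Conversely, the accumulated cost cannot stay within the budget,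
since otherwise positive steps recur forever; so some `j` has cost `≤ α y` while `cost (j + 1)`
exceeds it, and the `φ` promised for `j` lies strictly beyond the budget.
-/

section Cost

variable {c : ℕ → ℕ} {n : ℕ}

lemma cost_mono : Monotone (cost c n) := fun _ _ h =>
  Finset.sum_le_sum_of_subset (Finset.range_subset_range.2 h)

lemma cost_succ (j : ℕ) : cost c n (j + 1) = cost c n j + c (n + j) :=
  Finset.sum_range_succ _ _

lemma exists_pos_of_cost_lt_cost {a b : ℕ} (h : cost c n a < cost c n b) :
    ∃ k, a ≤ k ∧ k < b ∧ 0 < c (n + k) := by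
  have hab : a ≤ b := le_of_not_ge fun hba => (cost_mono hba).not_gt h
  have hpos : 0 < ∑ k ∈ Finset.Ico a b, c (n + k) := by
    rw [cost, cost, ← Finset.sum_range_add_sum_Ico _ hab] at h
    exact Nat.lt_of_add_lt_add_left (h.trans_eq' (add_zero _))
  obtain ⟨k, hk, hck⟩ := Finset.sum_pos_iff.1 hpos
  exact ⟨k, (Finset.mem_Ico.1 hk).1, (Finset.mem_Ico.1 hk).2, hck⟩

lemma exists_lt_cost (h : ∀ j, ∃ k, j ≤ k ∧ 0 < c (n + k)) (B : ℕ) : ∃ j, B < cost c n j := by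
  suffices ∀ B, ∃ j, B ≤ cost c n j from (this (B + 1)).imp fun _ => id
  intro B
  induction B with
  | zero => exact ⟨0, le_rfl⟩
  | succ B ih =>
    obtain ⟨j, hj⟩ := ih
    obtain ⟨k, hjk, hck⟩ := h j
    exact ⟨k + 1, by have := cost_mono (c := c) (n := n) hjk; rw [cost_succ]; omega⟩

lemma exists_cost_le_lt_cost_succ {B m : ℕ} (h : B < cost c n m) :
    ∃ j, cost c n j ≤ B ∧ B < cost c n (j + 1) := by
  induction m with
  | zero => simp [cost] at h
  | succ m ih =>
    by_cases hm : cost c n m ≤ B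
    exacts [⟨m, hm, h⟩, ih (not_le.1 hm)]

lemma forall_cost_le_iff_exists_lt_cost (B : ℕ) (Q : ℕ → Prop) :
    (∀ j, cost c n j ≤ B → ∃ k, j ≤ k ∧ 0 < c (n + k) ∧ ∃ m, k < m ∧ Q m) ↔
      ∃ m, B < cost c n m ∧ Q m := by
  constructor
  · intro h
    obtain ⟨m, hm⟩ : ∃ m, B < cost c n m := by
      by_contra! hbdd
      obtain ⟨m, hm⟩ := exists_lt_cost (fun j => (h j (hbdd j)).imp fun _ hk => ⟨hk.1, hk.2.1⟩) B
      exact hm.not_ge (hbdd m)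
    obtain ⟨j, hj, hj1⟩ := exists_cost_le_lt_cost_succ hm
    obtain ⟨k, hjk, -, m', hkm, hQ⟩ := h j hj
    exact ⟨m', hj1.trans_le (cost_mono (by omega)), hQ⟩
  · rintro ⟨m, hm, hQ⟩ j hj
    obtain ⟨k, hjk, hkm, hck⟩ := exists_pos_of_cost_lt_cost (hj.trans_lt hm)
    exact ⟨k, hjk, hck, m, hkm, hQ⟩

end Cost

section Semantics

variable {P V : Type} (κ : P) (w : ℕ → Set P) (c : ℕ → ℕ) (α : V → ℕ)

lemma sat_Fm_iff (ψ : cPLTL P V) (m : ℕ) :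
    Sat w c α (Fm κ ψ) m ↔ ∃ i, Sat w c α ψ (m + i) :=
  exists_congr fun _ => and_iff_left_of_imp fun _ _ _ => em _

lemma sat_FGt_iff (y : V) (φ : cPLTL P V) (n : ℕ) :
    Sat w c α (FGt κ y φ) n ↔
      ∀ j, cost c n j ≤ α y →
        ∃ k, j ≤ k ∧ κ ∈ w (n + k + 1) ∧ ∃ m, k < m ∧ Sat w c α φ (n + m) := by
  refine forall₂_congr fun j _ => ?_
  simp only [sat_Fm_iff, Sat]
  constructor
  · rintro ⟨i, hκ, i', hφ⟩
    refine ⟨j + i, by omega, by rwa [← add_assoc], j + i + 1 + i', by omega, ?_⟩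
    rwa [show n + (j + i + 1 + i') = n + j + i + 1 + i' by omega]
  · rintro ⟨k, hjk, hκ, m, hkm, hφ⟩
    refine ⟨k - j, ?_, m - (k + 1), ?_⟩
    · rwa [show n + j + (k - j) + 1 = n + k + 1 by omega]
    · rwa [show n + j + (k - j) + 1 + (m - (k + 1)) = n + m by omega]

end Semantics

theorem F_gt_correct {P V : Type} (κ : P) (w : ℕ → Set P) (c : ℕ → ℕ)
    (hκ : ∀ n, 0 < c n ↔ κ ∈ w (n + 1))
    (n : ℕ) (α : V → ℕ) (y : V) (φ : cPLTL P V) :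
    Sat w c α (FGt κ y φ) n ↔
      ∃ j, α y < cost c n j ∧ Sat w c α φ (n + j) := by
  rw [sat_FGt_iff]
  simp only [← hκ]
  exact forall_cost_le_iff_exists_lt_cost (α y) fun m => Sat w c α φ (n + m)
end

section
/- For every cost-trace w, position n, and valuation α: (w,n,α) ⊨ φ U_{≤x} ψ — i.e. there exists j ≥ 0 with Σ_{k=n}^{n+j-1} cₖ ≤ α(x), (w,n+j,α) ⊨ ψ, and (w,n+k,α) ⊨ φ for all 0 ≤ k < j — if and only if (w,n,α) ⊨ (φ U ψ) ∧ F_{≤x}ψ. (Note: this equivalence holds because costs are nonnegative, so the cheapest witness of ψ reachable within cost α(x) can be combined with the until-witness.) -/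
theorem cost_monotone (c : ℕ → ℕ) (n : ℕ) : Monotone (cost c n) := fun _ _ h =>
  Finset.sum_le_sum_of_subset (Finset.range_subset_range.2 h)

theorem until_le_correct {P V : Type} (w : ℕ → Set P) (c : ℕ → ℕ)
    (n : ℕ) (α : V → ℕ) (x : V) (φ ψ : cPLTL P V) :
    (∃ j, cost c n j ≤ α x ∧ Sat w c α ψ (n + j) ∧ ∀ k < j, Sat w c α φ (n + k)) ↔
      Sat w c α (.and (.until_ φ ψ) (.fle x ψ)) n := by
  constructor
  · rintro ⟨j, hcost, hψ, hφ⟩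
    exact ⟨⟨j, hψ, hφ⟩, ⟨j, hcost, hψ⟩⟩
  · -- The earlier of the two ψ-witnesses serves both conjuncts.
    rintro ⟨⟨j₁, hψ₁, hφ₁⟩, ⟨j₂, hcost₂, hψ₂⟩⟩
    rcases le_or_gt j₁ j₂ with hle | hlt
    · exact ⟨j₁, (cost_monotone c n hle).trans hcost₂, hψ₁, hφ₁⟩
    · exact ⟨j₂, hcost₂, hψ₂, fun k hk => hφ₁ k (hk.trans hlt)⟩
end

section
/- Pumping lemma for colored Büchi graphs with costs: if a colored Büchi graph with costs with n vertices has an initial pumpable fair path, then it has one of the ultimately periodic form π₀π₁^ω with |π₀π₁| ∈ O(n²). -/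
/-!
Among all path prefixes that return at `len` to the vertex seen at `start`, visit `F` in
between, pump in every block completed by `len`, and whose changepoint pattern survives repeating
the loop (`CBG.LassoWitness`), take one of minimal length; repeating its loop gives the lasso.
Minimality bounds the length by `10 n²`, `n` the number of vertices. A block longer than `4 n`
could be replaced by a short walk that keeps a positive-cost cycle and the visit to `F`. Two
changepoints on the same side of `start` carrying the same vertex could be cut out, or, above
`start`, closed into a shorter loop; so at most `2 n` changepoints precede `len`, and for the same
reason the label-constant tail after the last one has at most `2 n` positions.
-/

/-- A colored Büchi graph with costs: finite directed graph, initial vertex,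
p-labeling, cost function on edges, accepting set. -/
structure CBG (V : Type) where
  E : V → V → Prop
  vI : V
  lab : V → Prop       -- whether the vertex is labeled with p
  cst : V → V → ℕ
  F : Set V

namespace CBG

variable {V : Type} (G : CBG V)

/-- An initial infinite path. -/
def IsPath (π : ℕ → V) : Prop :=
  π 0 = G.vI ∧ ∀ n, G.E (π n) (π (n + 1))

/-- Fairness: π visits F infinitely often. -/
def Fair (π : ℕ → V) : Prop := {n | π n ∈ G.F}.Infinite

/-- n is a changepoint of π: position 0 or the p-label changes. -/
def Changepoint (π : ℕ → V) (n : ℕ) : Prop :=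
  n = 0 ∨ ¬ (G.lab (π (n - 1)) ↔ G.lab (π n))

/-- m and m' are successive changepoints of π; the block consists of
positions m, ..., m'-1. -/
def SuccessiveCP (π : ℕ → V) (m m' : ℕ) : Prop :=
  m < m' ∧ G.Changepoint π m ∧ G.Changepoint π m' ∧
    ∀ i, m < i → i < m' → ¬ G.Changepoint π i

/-- π is pumpable: each block contains a vertex repetition whose cycle has
non-zero cost. -/
def Pumpable (π : ℕ → V) : Prop :=
  ∀ m m', G.SuccessiveCP π m m' →
    ∃ i j, m ≤ i ∧ i < j ∧ j ≤ m' - 1 ∧ π i = π j ∧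
      0 < ∑ k ∈ Finset.Ico i j, G.cst (π k) (π (k + 1))

end CBG

section Walk

variable {V : Type*} {R Q : V → V → Prop}

def walkAppend (g : ℕ → V) (K : ℕ) (h : ℕ → V) : ℕ → V :=
  fun n => if n ≤ K then g n else h (n - K)

theorem walkAppend_of_le {g h : ℕ → V} {K n : ℕ} (hn : n ≤ K) : walkAppend g K h n = g n :=
  if_pos hn

theorem walkAppend_add {g h : ℕ → V} {K : ℕ} (hK : g K = h 0) (n : ℕ) :
    walkAppend g K h (K + n) = h n := by
  unfold walkAppend
  split_ifs with hn
  · obtain rfl : n = 0 := by omega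
    simpa using hK
  · simp

def IsWalk (R : V → V → Prop) (g : ℕ → V) (K : ℕ) : Prop :=
  ∀ l < K, R (g l) (g (l + 1))

theorem IsWalk.mono {g : ℕ → V} {K K' : ℕ} (hg : IsWalk R g K) (h : K' ≤ K) : IsWalk R g K' :=
  fun l hl => hg l (by omega)

theorem IsWalk.drop {g : ℕ → V} {K : ℕ} (hg : IsWalk R g K) (a : ℕ) :
    IsWalk R (fun l => g (a + l)) (K - a) :=
  fun l hl => by simpa only [Nat.add_assoc] using hg (a + l) (by omega)

theorem IsWalk.append {g h : ℕ → V} {K M : ℕ} (hK : g K = h 0) (hg : IsWalk R g K)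
    (hh : IsWalk R h M) : IsWalk R (walkAppend g K h) (K + M) := by
  intro l hl
  rcases Nat.lt_or_ge l K with hlK | hlK
  · rw [walkAppend_of_le hlK.le, walkAppend_of_le hlK]
    exact hg l hlK
  · obtain ⟨i, rfl⟩ := Nat.exists_eq_add_of_le hlK
    rw [walkAppend_add hK, Nat.add_assoc, walkAppend_add hK]
    exact hh i (by omega)

def HasCycleWith (Q : V → V → Prop) (g : ℕ → V) (K : ℕ) : Prop :=
  ∃ i p j, i ≤ p ∧ p < j ∧ j ≤ K ∧ g i = g j ∧ Q (g p) (g (p + 1))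

theorem HasCycleWith.congr {g g' : ℕ → V} {K : ℕ} (hg : HasCycleWith Q g K)
    (h : ∀ l ≤ K, g l = g' l) : HasCycleWith Q g' K := by
  obtain ⟨i, p, j, hip, hpj, hjK, hij, hQ⟩ := hg
  refine ⟨i, p, j, hip, hpj, hjK, ?_, ?_⟩
  · rw [← h i (by omega), ← h j hjK, hij]
  · rw [← h p (by omega), ← h (p + 1) (by omega)]
    exact hQ

theorem HasCycleWith.mono {g : ℕ → V} {K K' : ℕ} (hg : HasCycleWith Q g K) (h : K ≤ K') :
    HasCycleWith Q g K' := by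
  obtain ⟨i, p, j, hip, hpj, hjK, hij, hQ⟩ := hg
  exact ⟨i, p, j, hip, hpj, hjK.trans h, hij, hQ⟩

theorem HasCycleWith.of_drop {g : ℕ → V} {a K : ℕ} (hg : HasCycleWith Q (fun l => g (a + l)) K) :
    HasCycleWith Q g (a + K) := by
  obtain ⟨i, p, j, hip, hpj, hjK, hij, hQ⟩ := hg
  exact ⟨a + i, a + p, a + j, by omega, by omega, by omega, hij, hQ⟩

def WalkVia (R : V → V → Prop) (u v : V) (K : ℕ) : Prop :=
  ∃ g : ℕ → V, IsWalk R g K ∧ g 0 = u ∧ g K = v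

theorem IsWalk.walkVia {g : ℕ → V} {K : ℕ} (hg : IsWalk R g K) {a b : ℕ} (hab : a ≤ b)
    (hb : b ≤ K) : WalkVia R (g a) (g b) (b - a) :=
  ⟨fun l => g (a + l), (hg.drop a).mono (K' := b - a) (by omega), by simp,
    by simp only [Nat.add_sub_cancel' hab]⟩

theorem WalkVia.trans {u v w : V} {K M : ℕ} (h₁ : WalkVia R u v K) (h₂ : WalkVia R v w M) :
    WalkVia R u w (K + M) := by
  obtain ⟨g, hg, hg0, hgK⟩ := h₁
  obtain ⟨h, hh, hh0, hhM⟩ := h₂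
  have hK : g K = h 0 := hgK.trans hh0.symm
  exact ⟨walkAppend g K h, hg.append hK hh, by rw [walkAppend_of_le (Nat.zero_le _), hg0],
    by rw [walkAppend_add hK, hhM]⟩

theorem exists_lt_map_eq_of_card_le [Fintype V] (f : ℕ → V) {k : ℕ}
    (hk : Fintype.card V ≤ k) : ∃ a b, a < b ∧ b ≤ k ∧ f a = f b := by
  obtain ⟨x, hx, y, hy, hxy, hfxy⟩ := Finset.exists_ne_map_eq_of_card_lt_of_maps_to
    (s := Finset.range (k + 1)) (t := Finset.univ) (f := f) (by simpa using Nat.lt_succ_of_le hk)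
    (fun _ _ => Finset.mem_coe.2 (Finset.mem_univ _))
  rw [Finset.mem_range] at hx hy
  rcases Nat.lt_or_gt_of_ne hxy with h | h
  · exact ⟨x, y, h, by omega, hfxy⟩
  · exact ⟨y, x, h, by omega, hfxy.symm⟩

theorem card_le_of_lt_imp_ne [Fintype V] (f : ℕ → V) {T : Finset ℕ}
    (h : ∀ x ∈ T, ∀ y ∈ T, x < y → f x ≠ f y) : T.card ≤ Fintype.card V := by
  refine (Finset.card_le_card_of_injOn f (fun x _ => Finset.mem_coe.2 (Finset.mem_univ (f x)))
    fun x hx y hy hxy => ?_).trans_eq Finset.card_univ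
  by_contra hne
  rcases Nat.lt_or_gt_of_ne hne with hlt | hlt
  · exact h x hx y hy hlt hxy
  · exact h y hy x hx hlt hxy.symm

theorem WalkVia.exists_lt_card [Fintype V] {u v : V} {K : ℕ} (h : WalkVia R u v K) :
    ∃ M < Fintype.card V, WalkVia R u v M := by
  induction K using Nat.strong_induction_on generalizing u v with
  | _ K ih =>
  obtain ⟨g, hg, rfl, rfl⟩ := h
  by_cases hK : K < Fintype.card V
  · exact ⟨K, hK, g, hg, rfl, rfl⟩
  obtain ⟨a, b, hab, hbK, hgab⟩ := exists_lt_map_eq_of_card_le g (not_lt.1 hK)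
  have hpre := hg.walkVia (Nat.zero_le a) (by omega)
  have hsuf := hg.walkVia hbK le_rfl
  rw [← hgab] at hsuf
  exact ih _ (by omega) (hpre.trans hsuf)

def PumpingWalk (R Q : V → V → Prop) (u v : V) (K : ℕ) (z : V) : Prop :=
  ∃ g : ℕ → V, IsWalk R g K ∧ g 0 = u ∧ g K = v ∧ HasCycleWith Q g K ∧ ∃ q ≤ K, g q = z

theorem PumpingWalk.visit_start {u v z : V} {K : ℕ} (h : PumpingWalk R Q u v K z) :
    PumpingWalk R Q u v K u := by
  obtain ⟨g, hg, hg0, hgK, hc, -⟩ := h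
  exact ⟨g, hg, hg0, hgK, hc, 0, Nat.zero_le _, hg0⟩

theorem PumpingWalk.visit_end {u v z : V} {K : ℕ} (h : PumpingWalk R Q u v K z) :
    PumpingWalk R Q u v K v := by
  obtain ⟨g, hg, hg0, hgK, hc, -⟩ := h
  exact ⟨g, hg, hg0, hgK, hc, K, le_rfl, hgK⟩

theorem PumpingWalk.prepend {u v w z : V} {K M : ℕ} (h₁ : WalkVia R u v K)
    (h₂ : PumpingWalk R Q v w M z) : PumpingWalk R Q u w (K + M) z := by
  obtain ⟨g, hg, hg0, hgK⟩ := h₁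
  obtain ⟨h, hh, hh0, hhM, hc, q, hqM, hq⟩ := h₂
  have hK : g K = h 0 := hgK.trans hh0.symm
  refine ⟨walkAppend g K h, hg.append hK hh, by rw [walkAppend_of_le (Nat.zero_le _), hg0],
    by rw [walkAppend_add hK, hhM], HasCycleWith.of_drop (hc.congr fun l _ => ?_), K + q,
    by omega, by rw [walkAppend_add hK, hq]⟩
  rw [walkAppend_add hK]

theorem PumpingWalk.append {u v w z : V} {K M : ℕ} (h₁ : PumpingWalk R Q u v K z)
    (h₂ : WalkVia R v w M) : PumpingWalk R Q u w (K + M) z := by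
  obtain ⟨g, hg, hg0, hgK, hc, q, hqK, hq⟩ := h₁
  obtain ⟨h, hh, hh0, hhM⟩ := h₂
  have hK : g K = h 0 := hgK.trans hh0.symm
  refine ⟨walkAppend g K h, hg.append hK hh, by rw [walkAppend_of_le (Nat.zero_le _), hg0],
    by rw [walkAppend_add hK, hhM],
    (hc.congr fun l hl => (walkAppend_of_le hl).symm).mono (Nat.le_add_right K M), q,
    by omega, by rw [walkAppend_of_le hqK, hq]⟩

theorem PumpingWalk.of_step {u u' : V} {M : ℕ} (hR : R u u') (hQ : Q u u')
    (h : WalkVia R u' u M) : PumpingWalk R Q u u (M + 1) u := by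
  obtain ⟨g, hg, hg0, hgM⟩ := h
  refine ⟨fun l => if l = 0 then u else g (l - 1), fun l hl => ?_, rfl, by simpa using hgM,
    ⟨0, 0, M + 1, le_rfl, by omega, le_rfl, by simpa using hgM.symm, by simpa [hg0] using hQ⟩,
    0, Nat.zero_le _, rfl⟩
  rcases l with _ | l
  · simpa [hg0] using hR
  · simpa using hg l (by omega)

theorem IsWalk.exists_short_pumpingWalk [Fintype V] {f : ℕ → V} {k w : ℕ} (hf : IsWalk R f k)
    (hcyc : HasCycleWith Q f k) (hw : w ≤ k) :
    ∃ K < 4 * Fintype.card V, PumpingWalk R Q (f 0) (f k) K (f w) := by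
  obtain ⟨i, p, j, hip, hpj, hjk, hij, hQ⟩ := hcyc
  have seg : ∀ x y, x ≤ y → y ≤ k → ∃ M < Fintype.card V, WalkVia R (f x) (f y) M :=
    fun x y hxy hy => (hf.walkVia hxy hy).exists_lt_card
  have hround := hf.walkVia hip (by omega)
  rw [hij] at hround
  obtain ⟨M, hM, hback⟩ := ((hf.walkVia hpj hjk).trans hround).exists_lt_card
  have hloop : PumpingWalk R Q (f p) (f p) (M + 1) (f p) := .of_step (hf p (by omega)) hQ hback
  -- `f 0 ⇝ f p`, the loop, `f p ⇝ f k`, with `f w` on an outer leg; each leg has `< card V` steps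
  rcases le_or_gt w p with hwp | hpw
  · obtain ⟨K₁, hK₁, h₁⟩ := seg 0 w (Nat.zero_le _) hw
    obtain ⟨K₂, hK₂, h₂⟩ := seg w p hwp (by omega)
    obtain ⟨K₃, hK₃, h₃⟩ := seg p k (by omega) le_rfl
    exact ⟨K₁ + (K₂ + (M + 1 + K₃)), by omega,
      .prepend h₁ (PumpingWalk.prepend h₂ (hloop.append h₃)).visit_start⟩
  · obtain ⟨K₁, hK₁, h₁⟩ := seg 0 p (Nat.zero_le _) (by omega)
    obtain ⟨K₂, hK₂, h₂⟩ := seg p w hpw.le hw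
    obtain ⟨K₃, hK₃, h₃⟩ := seg w k hw le_rfl
    exact ⟨K₁ + (M + 1 + K₂ + K₃), by omega, .prepend h₁ ((hloop.append h₂).visit_end.append h₃)⟩

end Walk

theorem Set.Infinite.exists_inter_fiber_infinite {α β : Type*} [Finite β] {S : Set α}
    (hS : S.Infinite) (f : α → β) : ∃ b, (S ∩ f ⁻¹' {b}).Infinite := by
  by_contra! h
  exact hS ((Set.finite_iUnion h).subset fun a ha => Set.mem_iUnion.2 ⟨f a, ha, rfl⟩)

section Splice

variable {V : Type*} {R : V → V → Prop} {π g : ℕ → V} {c K d : ℕ}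

/-- Replace `π c, …, π d` by the walk `g 0, …, g K` (which should start at `π c` and end at
`π d`). -/
def splice (π : ℕ → V) (c : ℕ) (g : ℕ → V) (K d : ℕ) : ℕ → V :=
  walkAppend (walkAppend π c g) (c + K) fun n => π (d + n)

theorem splice_of_le {p : ℕ} (hp : p ≤ c) : splice π c g K d p = π p := by
  rw [splice, walkAppend_of_le (by omega), walkAppend_of_le hp]

variable (hg0 : g 0 = π c)
include hg0

theorem splice_add {q : ℕ} (hq : q ≤ K) : splice π c g K d (c + q) = g q := by
  rw [splice, walkAppend_of_le (by omega), walkAppend_add hg0.symm]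

theorem splice_add_add (hgK : g K = π d) (k : ℕ) :
    splice π c g K d (c + K + k) = π (d + k) :=
  walkAppend_add (by rw [walkAppend_add hg0.symm, hgK, Nat.add_zero]) k

theorem rel_splice_succ (hgK : g K = π d) (hπ : ∀ n, R (π n) (π (n + 1))) (hg : IsWalk R g K)
    (n : ℕ) : R (splice π c g K d n) (splice π c g K d (n + 1)) := by
  have hpre : IsWalk R (walkAppend π c g) (c + K) :=
    IsWalk.append hg0.symm (fun l _ => hπ l) hg
  refine hpre.append (by rw [walkAppend_add hg0.symm, hgK, Nat.add_zero])
    (M := n + 1) (fun l _ => by simpa only [Nat.add_assoc] using hπ (d + l)) n (by omega)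

end Splice

def lasso {V : Type*} (π : ℕ → V) (s t : ℕ) : ℕ → V :=
  fun n => if n < s then π n else π (s + (n - s) % t)

section LassoFun

variable {V : Type*} {π : ℕ → V} {s t n : ℕ}

theorem lasso_of_le (hclosed : π (s + t) = π s) (hn : n ≤ s + t) : lasso π s t n = π n := by
  unfold lasso
  split_ifs with hns
  · rfl
  rcases Nat.lt_or_ge n (s + t) with h | h
  · rw [Nat.mod_eq_of_lt (by omega), Nat.add_sub_cancel' (by omega)]
  · obtain rfl : n = s + t := by omega
    rw [Nat.add_sub_cancel_left, Nat.mod_self, Nat.add_zero, hclosed]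

theorem lasso_add_mul (hn : s ≤ n) (l : ℕ) : lasso π s t (n + l * t) = lasso π s t n := by
  unfold lasso
  rw [if_neg (by omega), if_neg (by omega), Nat.sub_add_comm hn, Nat.add_mul_mod_self_right]

theorem lasso_add (hn : s ≤ n) : lasso π s t (n + t) = lasso π s t n := by
  simpa using lasso_add_mul (π := π) (t := t) hn 1

end LassoFun

namespace CBG

variable {V : Type} {G : CBG V}

variable (G) in
def PositiveEdge (u v : V) : Prop := 0 < G.cst u v

variable (G) in
def BlockEdge (u v : V) : Prop := G.E u v ∧ (G.lab u ↔ G.lab v)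

variable (G) in
/-- The block `π m, …, π (m' - 1)` contains a cycle of non-zero cost. -/
def BlockPumps (π : ℕ → V) (m m' : ℕ) : Prop :=
  HasCycleWith G.PositiveEdge (fun l => π (m + l)) (m' - 1 - m)

variable (G) in
def PumpableUpTo (π : ℕ → V) (b : ℕ) : Prop :=
  ∀ m m', G.SuccessiveCP π m m' → m' ≤ b → G.BlockPumps π m m'

variable (G) in
/-- Repeating `π s, …, π (e - 1)` forever then creates no block that wraps around the loop. -/
def LoopCompatible (π : ℕ → V) (s e : ℕ) : Prop :=
  (G.Changepoint π s ∧ G.Changepoint π e) ∨ ∀ n, s < n → n ≤ e → ¬ G.Changepoint π n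

variable {π σ τ : ℕ → V}

theorem changepoint_zero (π : ℕ → V) : G.Changepoint π 0 := Or.inl rfl

theorem changepoint_succ_iff {n : ℕ} :
    G.Changepoint π (n + 1) ↔ ¬ (G.lab (π n) ↔ G.lab (π (n + 1))) := by
  simp [Changepoint]

theorem pumpable_iff : G.Pumpable π ↔ ∀ b, G.PumpableUpTo π b := by
  refine ⟨fun h b m m' hb _ => ?_, fun h m m' hb => ?_⟩
  · obtain ⟨i, j, hmi, hij, hjm', hπij, hpos⟩ := h m m' hb
    obtain ⟨k, hk, hkpos⟩ := Finset.sum_pos_iff.1 hpos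
    rw [Finset.mem_Ico] at hk
    refine ⟨i - m, k - m, j - m, by omega, by omega, by omega, ?_, ?_⟩
    · simpa only [Nat.add_sub_cancel' hmi, Nat.add_sub_cancel' (hmi.trans hij.le)] using hπij
    · simpa only [PositiveEdge, show m + (k - m) = k by omega,
        show m + (k - m + 1) = k + 1 by omega] using hkpos
  · obtain ⟨i, p, j, hip, hpj, hjm', hπij, hpos⟩ := h m' m m' hb le_rfl
    refine ⟨m + i, m + j, by omega, by omega, by omega, hπij,
      Finset.sum_pos_iff.2 ⟨m + p, Finset.mem_Ico.2 ⟨by omega, by omega⟩, hpos⟩⟩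

theorem PumpableUpTo.mono {b b' : ℕ} (h : G.PumpableUpTo π b) (hb : b' ≤ b) :
    G.PumpableUpTo π b' :=
  fun m m' hmm' hm' => h m m' hmm' (hm'.trans hb)

section Window

variable {x y L : ℕ} (hw : ∀ k ≤ L, σ (x + k) = τ (y + k))
include hw

theorem changepoint_window {k : ℕ} (hk : 0 < k) (hkL : k ≤ L) :
    G.Changepoint σ (x + k) ↔ G.Changepoint τ (y + k) := by
  obtain ⟨k, rfl⟩ : ∃ k', k = k' + 1 := ⟨k - 1, by omega⟩
  rw [← Nat.add_assoc, ← Nat.add_assoc, changepoint_succ_iff, changepoint_succ_iff,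
    Nat.add_assoc, Nat.add_assoc, hw k (by omega), hw (k + 1) hkL]

theorem successiveCP_window {a a' : ℕ} (haL : a' ≤ L) (h0 : 0 < a ∨ G.Changepoint τ y)
    (h : G.SuccessiveCP σ (x + a) (x + a')) : G.SuccessiveCP τ (y + a) (y + a') := by
  obtain ⟨hlt, hcp, hcp', hnone⟩ := h
  refine ⟨by omega, ?_, (changepoint_window hw (by omega) haL).1 hcp', fun i hi hi' hcp => ?_⟩
  · rcases Nat.eq_zero_or_pos a with rfl | ha
    · simpa using h0.resolve_left (lt_irrefl 0)
    · exact (changepoint_window hw ha (by omega)).1 hcp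
  · obtain ⟨k, rfl⟩ := Nat.exists_eq_add_of_le (show y ≤ i by omega)
    exact hnone (x + k) (by omega) (by omega) ((changepoint_window hw (by omega) (by omega)).2 hcp)

theorem BlockPumps.of_window {a a' : ℕ} (ha : a < a') (haL : a' ≤ L)
    (h : G.BlockPumps τ (y + a) (y + a')) : G.BlockPumps σ (x + a) (x + a') := by
  unfold BlockPumps at h ⊢
  rw [show x + a' - 1 - (x + a) = y + a' - 1 - (y + a) by omega]
  exact h.congr fun l hl => by rw [Nat.add_assoc, Nat.add_assoc, hw (a + l) (by omega)]

theorem PumpableUpTo.blockPumps_of_window (hτ : G.PumpableUpTo τ (y + L)) {m m' : ℕ}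
    (hb : G.SuccessiveCP σ m m') (hxm : x ≤ m) (hm' : m' ≤ x + L)
    (hstart : m = x → G.Changepoint τ y) : G.BlockPumps σ m m' := by
  obtain ⟨a, rfl⟩ := Nat.exists_eq_add_of_le hxm
  obtain ⟨a', rfl⟩ := Nat.exists_eq_add_of_le (hxm.trans hb.1.le)
  have h0 : 0 < a ∨ G.Changepoint τ y := by
    rcases Nat.eq_zero_or_pos a with rfl | ha
    · exact Or.inr (hstart rfl)
    · exact Or.inl ha
  have haa' := hb.1
  exact (hτ _ _ (successiveCP_window hw (by omega) h0 hb) (by omega)).of_window hw (by omega)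
    (by omega)

end Window

section Prefix

variable {L : ℕ} (h : ∀ n ≤ L, σ n = τ n)
include h

theorem changepoint_congr_of_le {p : ℕ} (hp : p ≤ L) :
    G.Changepoint σ p ↔ G.Changepoint τ p := by
  rcases Nat.eq_zero_or_pos p with rfl | hp0
  · exact iff_of_true (changepoint_zero σ) (changepoint_zero τ)
  · simpa using changepoint_window (x := 0) (y := 0) (fun k hk => by simpa using h k hk) hp0 hp

theorem PumpableUpTo.congr_of_le (hτ : G.PumpableUpTo τ L) : G.PumpableUpTo σ L :=
  fun m m' hb hm' => PumpableUpTo.blockPumps_of_window (x := 0) (y := 0)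
    (fun k hk => by simpa using h k hk) (by simpa using hτ) hb (Nat.zero_le _) (by simpa using hm')
    fun _ => changepoint_zero τ

end Prefix

section Splice

variable {g : ℕ → V} {b c K d : ℕ}

theorem isPath_splice (hπ : G.IsPath π) (hg : IsWalk G.E g K) (hg0 : g 0 = π c)
    (hgK : g K = π d) : G.IsPath (splice π c g K d) :=
  ⟨(splice_of_le (Nat.zero_le c)).trans hπ.1, rel_splice_succ hg0 hgK hπ.2 hg⟩

theorem changepoint_splice_of_le {p : ℕ} (hp : p ≤ c) :
    G.Changepoint (splice π c g K d) p ↔ G.Changepoint π p :=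
  changepoint_congr_of_le (fun _ hn => splice_of_le hn) hp

theorem changepoint_splice_add_add (hg0 : g 0 = π c) (hgK : g K = π d) {k : ℕ} (hk : 0 < k) :
    G.Changepoint (splice π c g K d) (c + K + k) ↔ G.Changepoint π (d + k) :=
  changepoint_window (L := k) (fun k' _ => splice_add_add hg0 hgK k') hk le_rfl

theorem not_changepoint_splice_add (hg : IsWalk G.BlockEdge g K) (hg0 : g 0 = π c) {q : ℕ}
    (hq : 0 < q) (hqK : q ≤ K) : ¬ G.Changepoint (splice π c g K d) (c + q) := by
  obtain ⟨q, rfl⟩ : ∃ q', q = q' + 1 := ⟨q - 1, by omega⟩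
  rw [← Nat.add_assoc, changepoint_succ_iff, not_not, Nat.add_assoc, splice_add hg0 (by omega),
    splice_add hg0 hqK]
  exact (hg q (by omega)).2

theorem PumpableUpTo.splice_cut (hπ : G.PumpableUpTo π b) (hcd : c < d) (hdb : d ≤ b)
    (heq : π c = π d)
    (hcut : (G.Changepoint π c ∧ G.Changepoint π d) ∨ ∀ n, c < n → n ≤ b → ¬ G.Changepoint π n) :
    G.PumpableUpTo (splice π c (fun _ => π c) 0 d) (c + (b - d)) := by
  have hright : ∀ k, splice π c (fun _ => π c) 0 d (c + k) = π (d + k) :=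
    splice_add_add rfl heq
  intro m m' hb hm'
  rcases le_or_gt m' c with hm'c | hcm'
  · exact (hπ.mono (by omega)).congr_of_le (fun _ hn => splice_of_le hn) m m' hb hm'c
  rcases hcut with ⟨hc, hd⟩ | hnone
  · have hcm : c ≤ m := by
      by_contra hmc
      exact hb.2.2.2 c (by omega) hcm' ((changepoint_splice_of_le le_rfl).2 hc)
    exact (hπ.mono (by omega)).blockPumps_of_window (L := m' - c) (fun k _ => hright k) hb hcm
      (by omega) fun _ => hd
  · have hcp := hb.2.2.1
    rw [← Nat.add_sub_cancel' hcm'.le,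
      changepoint_window (L := m' - c) (fun k _ => hright k) (by omega) le_rfl] at hcp
    exact (hnone _ (by omega) (by omega) hcp).elim

theorem PumpableUpTo.splice_block (hπ : G.PumpableUpTo π b) {c' : ℕ}
    (hblock : G.SuccessiveCP π c c') (hc'b : c' ≤ b) (hg : IsWalk G.BlockEdge g K)
    (hcyc : HasCycleWith G.PositiveEdge g K) (hg0 : g 0 = π c) (hgK : g K = π (c' - 1)) :
    G.PumpableUpTo (splice π c g K (c' - 1)) (c + K + (b - (c' - 1))) := by
  have hcc' := hblock.1
  have hmid := fun q => not_changepoint_splice_add (q := q) (d := c' - 1) hg hg0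
  have hend : G.Changepoint (splice π c g K (c' - 1)) (c + K + 1) := by
    rw [changepoint_splice_add_add hg0 hgK one_pos, Nat.sub_add_cancel (by omega)]
    exact hblock.2.2.1
  intro m m' hb hm'
  rcases le_or_gt m' c with hm'c | hcm'
  · exact (hπ.mono (by omega)).congr_of_le (fun _ hn => splice_of_le hn) m m' hb hm'c
  have hcm : c ≤ m := by
    by_contra hmc
    exact hb.2.2.2 c (by omega) hcm' ((changepoint_splice_of_le le_rfl).2 hblock.2.1)
  rcases le_or_gt m (c + K) with hmK | hKm
  · obtain rfl : m = c := by
      by_contra hne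
      have hcp := hb.2.1
      rw [← Nat.add_sub_cancel' hcm] at hcp
      exact hmid (m - c) (by omega) (by omega) hcp
    obtain rfl : m' = m + K + 1 := by
      rcases lt_trichotomy m' (m + K + 1) with h | h | h
      · have hcp := hb.2.2.1
        rw [← Nat.add_sub_cancel' hcm'.le] at hcp
        exact absurd hcp (hmid (m' - m) (by omega) (by omega))
      · exact h
      · exact absurd hend (hb.2.2.2 _ (by omega) h)
    unfold BlockPumps
    rw [show m + K + 1 - 1 - m = K by omega]
    exact hcyc.congr fun l hl => (splice_add hg0 hl).symm
  · exact (hπ.mono (by omega)).blockPumps_of_window (L := m' - (c + K))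
      (fun k _ => splice_add_add hg0 hgK k) hb hKm.le (by omega) fun h => absurd h (by omega)

end Splice

section Lasso

variable {s t : ℕ}

theorem isPath_lasso (ht : 0 < t) (hclosed : π (s + t) = π s) (hπ : G.IsPath π) :
    G.IsPath (lasso π s t) := by
  refine ⟨by rw [lasso_of_le hclosed (Nat.zero_le _)]; exact hπ.1, fun n => ?_⟩
  rcases Nat.lt_or_ge n s with hn | hn
  · rw [lasso_of_le hclosed (by omega), lasso_of_le hclosed (by omega)]
    exact hπ.2 n
  obtain ⟨r, l, hr, rfl⟩ : ∃ r l, r < t ∧ n = s + r + l * t :=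
    ⟨(n - s) % t, (n - s) / t, Nat.mod_lt _ ht, by rw [Nat.add_assoc, Nat.mod_add_div']; omega⟩
  rw [lasso_add_mul (by omega), Nat.add_right_comm, lasso_add_mul (by omega),
    lasso_of_le hclosed (by omega), lasso_of_le hclosed (by omega)]
  exact hπ.2 (s + r)

theorem fair_lasso (ht : 0 < t) (hclosed : π (s + t) = π s) {f : ℕ} (hsf : s ≤ f)
    (hft : f < s + t) (hF : π f ∈ G.F) : G.Fair (lasso π s t) :=
  Set.infinite_of_forall_exists_gt fun a => ⟨f + (a + 1) * t,
    show lasso π s t _ ∈ G.F by rw [lasso_add_mul hsf, lasso_of_le hclosed hft.le]; exact hF,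
    by nlinarith⟩

theorem not_changepoint_of_periodic (hper : ∀ n, s ≤ n → σ (n + t) = σ n) (ht : 0 < t)
    (hnone : ∀ n, s < n → n ≤ s + t → ¬ G.Changepoint σ n) :
    ∀ n, s < n → ¬ G.Changepoint σ n := by
  intro n
  induction n using Nat.strong_induction_on with
  | _ n ih =>
  intro hsn
  rcases le_or_gt n (s + t) with h | h
  · exact hnone n hsn h
  have hw : ∀ k ≤ n - (s + t), σ (s + t + k) = σ (s + k) := fun k _ => by
    rw [Nat.add_right_comm, hper _ (by omega)]
  rw [← Nat.add_sub_cancel' h.le, changepoint_window hw (by omega) le_rfl]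
  exact ih _ (by omega) (by omega)

theorem forall_pumpableUpTo_of_periodic (hper : ∀ n, s ≤ n → σ (n + t) = σ n) (ht : 0 < t)
    (hcompat : G.LoopCompatible σ s (s + t)) (hσ : G.PumpableUpTo σ (s + t)) :
    ∀ b, G.PumpableUpTo σ b := by
  have hw : ∀ k, σ (s + t + k) = σ (s + k) := fun k => by
    rw [Nat.add_right_comm, hper _ (by omega)]
  suffices ∀ m' m, G.SuccessiveCP σ m m' → G.BlockPumps σ m m' from
    fun b m m' hb _ => this m' m hb
  intro m'
  induction m' using Nat.strong_induction_on with
  | _ m' ih =>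
  intro m hb
  rcases le_or_gt m' (s + t) with h | h
  · exact hσ m m' hb h
  rcases hcompat with ⟨hs, hst⟩ | hnone
  · have hm : s + t ≤ m := by
      by_contra hm
      exact hb.2.2.2 (s + t) (by omega) h hst
    exact PumpableUpTo.blockPumps_of_window (L := m' - (s + t)) (fun k _ => hw k)
      (fun m₁ m₂ hb' hm₂ => ih m₂ (by omega) m₁ hb') hb hm (by omega) fun _ => hs
  · exact absurd hb.2.2.1 (not_changepoint_of_periodic hper ht hnone m' (by omega))

end Lasso

section SpliceIndex

variable {g : ℕ → V} {c K d : ℕ}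

/-- Where position `p` of `π` (outside the replaced segment) ends up in `splice π c g K d`. -/
def spliceIndex (c K d p : ℕ) : ℕ := if p ≤ c then p else c + K + (p - d)

theorem splice_spliceIndex (hg0 : g 0 = π c) (hgK : g K = π d) {p : ℕ} (hp : p ≤ c ∨ d ≤ p) :
    splice π c g K d (spliceIndex c K d p) = π p := by
  unfold spliceIndex
  split_ifs with hpc
  · exact splice_of_le hpc
  · rw [splice_add_add hg0 hgK, Nat.add_sub_cancel' (by omega)]

theorem changepoint_splice_spliceIndex (hg0 : g 0 = π c) (hgK : g K = π d) {p : ℕ}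
    (hp : p ≤ c ∨ d < p) :
    G.Changepoint (splice π c g K d) (spliceIndex c K d p) ↔ G.Changepoint π p := by
  unfold spliceIndex
  split_ifs with hpc
  · exact changepoint_splice_of_le hpc
  · rw [changepoint_splice_add_add hg0 hgK (by omega), Nat.add_sub_cancel' (by omega)]

theorem not_changepoint_splice (hg0 : g 0 = π c) (hgK : g K = π d) (hcd : c + K < d)
    (hmid : ∀ q, 0 < q → q ≤ K → ¬ G.Changepoint (splice π c g K d) (c + q)) {a e : ℕ}
    (hde : d ≤ e) (hnone : ∀ n, a < n → n ≤ e → ¬ G.Changepoint π n) :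
    ∀ n, spliceIndex c K d a < n → n ≤ spliceIndex c K d e →
      ¬ G.Changepoint (splice π c g K d) n := by
  intro n han hne hcp
  unfold spliceIndex at han hne
  rw [if_neg (by omega)] at hne
  rcases le_or_gt n c with hnc | hcn
  · rw [changepoint_splice_of_le hnc] at hcp
    exact hnone n (by split_ifs at han <;> omega) (by omega) hcp
  rcases le_or_gt n (c + K) with hnK | hKn
  · exact hmid (n - c) (by omega) (by omega) (by rwa [Nat.add_sub_cancel' hcn.le])
  · rw [← Nat.add_sub_cancel' hKn.le, changepoint_splice_add_add hg0 hgK (by omega)] at hcp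
    exact hnone _ (by split_ifs at han <;> omega) (by omega) hcp

end SpliceIndex

theorem SuccessiveCP.isWalk_blockEdge {c c' : ℕ} (h : G.SuccessiveCP π c c') (hπ : G.IsPath π) :
    IsWalk G.BlockEdge (fun l => π (c + l)) (c' - 1 - c) := by
  intro l hl
  have hncp := h.2.2.2 (c + l + 1) (by omega) (by omega)
  rw [changepoint_succ_iff, not_not] at hncp
  exact ⟨hπ.2 (c + l), hncp⟩

section Witness

variable (G) in
structure LassoWitness where
  path : ℕ → V
  start : ℕ
  fair : ℕ
  len : ℕ
  isPath : G.IsPath path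
  pumpableUpTo : G.PumpableUpTo path len
  start_le_fair : start ≤ fair
  fair_lt_len : fair < len
  path_len : path len = path start
  path_fair_mem : path fair ∈ G.F
  loopCompatible : G.LoopCompatible path start len

theorem LassoWitness.exists_lasso (w : G.LassoWitness) :
    ∃ σ, G.IsPath σ ∧ G.Fair σ ∧ G.Pumpable σ ∧
      ∃ s t, 0 < t ∧ s + t = w.len ∧ ∀ n, s ≤ n → σ (n + t) = σ n := by
  have hsf := w.start_le_fair
  have hflen := w.fair_lt_len
  obtain ⟨t, hlen⟩ : ∃ t, w.len = w.start + t := ⟨w.len - w.start, by omega⟩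
  have hclosed : w.path (w.start + t) = w.path w.start := by rw [← hlen]; exact w.path_len
  have hagree : ∀ n ≤ w.start + t, lasso w.path w.start t n = w.path n :=
    fun n hn => lasso_of_le hclosed hn
  have hcompat : G.LoopCompatible (lasso w.path w.start t) w.start (w.start + t) := by
    have hcp : ∀ p ≤ w.start + t,
        G.Changepoint (lasso w.path w.start t) p ↔ G.Changepoint w.path p :=
      fun p hp => changepoint_congr_of_le hagree hp
    rcases w.loopCompatible with ⟨h₁, h₂⟩ | hnone
    · exact Or.inl ⟨(hcp _ (by omega)).2 h₁, (hcp _ le_rfl).2 (hlen ▸ h₂)⟩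
    · exact Or.inr fun n hn hn' => by rw [hcp n hn']; exact hnone n hn (by omega)
  have hpump : G.PumpableUpTo (lasso w.path w.start t) (w.start + t) :=
    PumpableUpTo.congr_of_le hagree (hlen ▸ w.pumpableUpTo)
  refine ⟨_, isPath_lasso (by omega) hclosed w.isPath,
    fair_lasso (by omega) hclosed hsf (by omega) w.path_fair_mem,
    pumpable_iff.2 (forall_pumpableUpTo_of_periodic (fun n hn => lasso_add hn) (by omega)
      hcompat hpump), w.start, t, by omega, hlen.symm, fun n hn => lasso_add hn⟩

theorem LassoWitness.nonempty_of_pumpable [Finite V] (hπ : G.IsPath π) (hfair : G.Fair π)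
    (hpump : G.Pumpable π) : Nonempty G.LassoWitness := by
  have hup := pumpable_iff.1 hpump
  by_cases hcp : {n | G.Changepoint π n}.Infinite
  · obtain ⟨v, hv⟩ := Set.Infinite.exists_inter_fiber_infinite hcp π
    obtain ⟨s, hs, hsv⟩ := hv.nonempty
    obtain ⟨f, hf, hsf⟩ := hfair.exists_gt s
    obtain ⟨b, ⟨hb, hbv⟩, hfb⟩ := hv.exists_gt f
    exact ⟨⟨π, s, f, b, hπ, hup b, hsf.le, hfb, hbv.trans hsv.symm, hf, Or.inl ⟨hs, hb⟩⟩⟩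
  · obtain ⟨N, hN⟩ := (Set.not_infinite.1 hcp).bddAbove
    obtain ⟨v, hv⟩ := Set.Infinite.exists_inter_fiber_infinite hfair π
    obtain ⟨s, ⟨hs, hsv⟩, hNs⟩ := hv.exists_gt N
    obtain ⟨b, ⟨-, hbv⟩, hsb⟩ := hv.exists_gt s
    refine ⟨⟨π, s, s, b, hπ, hup b, le_rfl, hsb, hbv.trans hsv.symm, hs, Or.inr ?_⟩⟩
    exact fun n hsn _ hcpn => absurd (hN hcpn) (by omega)

theorem LassoWitness.exists_len_eq_of_loop (w : G.LassoWitness) {c d : ℕ} (hcf : c ≤ w.fair)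
    (hfd : w.fair < d) (hdlen : d ≤ w.len) (heq : w.path c = w.path d)
    (hcompat : G.LoopCompatible w.path c d) : ∃ w' : G.LassoWitness, w'.len = d :=
  ⟨{ w with
      start := c
      len := d
      pumpableUpTo := w.pumpableUpTo.mono hdlen
      start_le_fair := hcf
      fair_lt_len := hfd
      path_len := heq.symm
      loopCompatible := hcompat }, rfl⟩

theorem LassoWitness.exists_len_lt_of_cut (w : G.LassoWitness) {c d : ℕ} (hcd : c < d)
    (hdlen : d < w.len) (heq : w.path c = w.path d)
    (hcut : (G.Changepoint w.path c ∧ G.Changepoint w.path d) ∨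
      ∀ n, c < n → n ≤ w.len → ¬ G.Changepoint w.path n)
    (hs : d ≤ w.start ∨ w.start ≤ c) (hf : w.fair < c ∨ d ≤ w.fair) :
    ∃ w' : G.LassoWitness, w'.len < w.len := by
  have hsf := w.start_le_fair
  have hflen := w.fair_lt_len
  set g : ℕ → V := fun _ => w.path c
  have hg0 : g 0 = w.path c := rfl
  have hcp : ∀ p ≤ w.len, (p ≤ c ∨ d ≤ p) → G.Changepoint w.path p →
      G.Changepoint (splice w.path c g 0 d) (spliceIndex c 0 d p) := by
    intro p hp hpcd hcpp
    rcases eq_or_ne p d with rfl | hpd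
    · have hc : G.Changepoint w.path c :=
        hcut.elim And.left fun hnone => absurd hcpp (hnone _ hcd hp)
      rw [spliceIndex, if_neg (by omega), Nat.sub_self]
      exact (changepoint_splice_of_le le_rfl).2 hc
    · exact (changepoint_splice_spliceIndex (p := p) hg0 heq (by omega)).2 hcpp
  have hlen : spliceIndex c 0 d w.len = c + (w.len - d) := by
    rw [spliceIndex, if_neg (by omega), Nat.add_zero]
  refine ⟨⟨splice w.path c g 0 d, spliceIndex c 0 d w.start,
    spliceIndex c 0 d w.fair, spliceIndex c 0 d w.len,
    isPath_splice w.isPath (fun l hl => absurd hl (Nat.not_lt_zero l)) hg0 heq,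
    hlen ▸ w.pumpableUpTo.splice_cut hcd hdlen.le heq hcut, ?_, ?_, ?_, ?_, ?_⟩, ?_⟩
  · unfold spliceIndex; split_ifs <;> omega
  · unfold spliceIndex; split_ifs <;> omega
  · rw [splice_spliceIndex (p := w.len) hg0 heq (by omega), splice_spliceIndex hg0 heq hs.symm]
    exact w.path_len
  · rw [splice_spliceIndex (p := w.fair) hg0 heq (by omega)]
    exact w.path_fair_mem
  · rcases w.loopCompatible with ⟨h₁, h₂⟩ | hnone
    · exact Or.inl ⟨hcp _ (by omega) hs.symm h₁, hcp _ le_rfl (by omega) h₂⟩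
    · exact Or.inr (not_changepoint_splice hg0 heq (by omega)
        (fun _ hq hqK => absurd hqK (by omega)) hdlen.le hnone)
  · show spliceIndex c 0 d w.len < w.len
    omega

theorem LassoWitness.start_le_or_le_start (w : G.LassoWitness) {c c' : ℕ}
    (hblock : G.SuccessiveCP w.path c c') (hc'len : c' ≤ w.len) : w.start ≤ c ∨ c' ≤ w.start := by
  rcases w.loopCompatible with ⟨hs, -⟩ | hnone
  · by_contra h
    exact hblock.2.2.2 _ (by omega) (by omega) hs
  · by_contra h
    exact hnone c' (by omega) hc'len hblock.2.2.1

theorem LassoWitness.exists_len_lt_of_long_block [Fintype V] (w : G.LassoWitness) {c c' : ℕ}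
    (hblock : G.SuccessiveCP w.path c c') (hc'len : c' ≤ w.len)
    (hlong : 4 * Fintype.card V < c' - c) : ∃ w' : G.LassoWitness, w'.len < w.len := by
  have hsf := w.start_le_fair
  have hflen := w.fair_lt_len
  have hcc' := hblock.1
  have hsc := w.start_le_or_le_start hblock hc'len
  -- the shortened block has to keep the visit to `F` if it lies in the block
  obtain ⟨K, hK, g, hg, hg0, hgK, hcyc, q, hqK, hq⟩ :=
    (hblock.isWalk_blockEdge w.isPath).exists_short_pumpingWalk
      (w.pumpableUpTo c c' hblock hc'len)
      (w := if c ≤ w.fair ∧ w.fair < c' then w.fair - c else 0) (by split_ifs <;> omega)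
  rw [Nat.add_zero] at hg0
  rw [Nat.add_sub_cancel' (by omega)] at hgK
  have hlen : spliceIndex c K (c' - 1) w.len = c + K + (w.len - (c' - 1)) := by
    rw [spliceIndex, if_neg (by omega)]
  refine ⟨⟨splice w.path c g K (c' - 1), spliceIndex c K (c' - 1) w.start,
    if c ≤ w.fair ∧ w.fair < c' then c + q else spliceIndex c K (c' - 1) w.fair,
    spliceIndex c K (c' - 1) w.len, isPath_splice w.isPath (fun l hl => (hg l hl).1) hg0 hgK,
    hlen ▸ w.pumpableUpTo.splice_block hblock hc'len hg hcyc hg0 hgK, ?_, ?_, ?_, ?_, ?_⟩, ?_⟩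
  · unfold spliceIndex; split_ifs <;> omega
  · unfold spliceIndex; split_ifs <;> omega
  · rw [splice_spliceIndex (p := w.len) hg0 hgK (by omega),
      splice_spliceIndex (p := w.start) hg0 hgK (by omega)]
    exact w.path_len
  · split_ifs with hin
    · rw [if_pos hin, Nat.add_sub_cancel' hin.1] at hq
      rw [splice_add hg0 hqK, hq]
      exact w.path_fair_mem
    · rw [splice_spliceIndex (p := w.fair) hg0 hgK (by omega)]
      exact w.path_fair_mem
  · rcases w.loopCompatible with ⟨h₁, h₂⟩ | hnone
    · exact Or.inl ⟨(changepoint_splice_spliceIndex (p := w.start) hg0 hgK (by omega)).2 h₁,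
        (changepoint_splice_spliceIndex (p := w.len) hg0 hgK (by omega)).2 h₂⟩
    · exact Or.inr (not_changepoint_splice hg0 hgK (by omega)
        (fun _ => not_changepoint_splice_add hg hg0) (by omega) hnone)
  · show spliceIndex c K (c' - 1) w.len < w.len
    omega

end Witness

section Counting

open Classical in
theorem successiveCP_findGreatest {c : ℕ} (hc : G.Changepoint π c) (hc0 : 0 < c) :
    G.SuccessiveCP π (Nat.findGreatest (G.Changepoint π) (c - 1)) c :=
  ⟨by have := Nat.findGreatest_le (P := G.Changepoint π) (c - 1); omega,
    Nat.findGreatest_spec (Nat.zero_le _) (changepoint_zero π), hc,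
    fun _ hi hic => Nat.findGreatest_is_greatest hi (by omega)⟩

open Classical in
theorem le_count_mul_of_blocks_le {X B : ℕ}
    (hgap : ∀ c c', G.SuccessiveCP π c c' → c' ≤ X → c' - c ≤ B) {c : ℕ}
    (hc : G.Changepoint π c) (hcX : c ≤ X) : c ≤ Nat.count (G.Changepoint π) c * B := by
  induction c using Nat.strong_induction_on with
  | _ c ih =>
  rcases Nat.eq_zero_or_pos c with rfl | hc0
  · exact Nat.zero_le _
  have hb := successiveCP_findGreatest hc hc0
  set c₀ := Nat.findGreatest (G.Changepoint π) (c - 1)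
  have hlt := hb.1
  have hprev := ih c₀ hlt hb.2.1 (by omega)
  have hcount := Nat.count_strict_mono hb.2.1 hlt
  have hgap' := hgap c₀ c hb hcX
  calc c ≤ Nat.count (G.Changepoint π) c₀ * B + B := by omega
    _ = (Nat.count (G.Changepoint π) c₀ + 1) * B := by ring
    _ ≤ Nat.count (G.Changepoint π) c * B := Nat.mul_le_mul_right _ hcount

end Counting

section Minimal

variable {w : G.LassoWitness} (hmin : ∀ w' : G.LassoWitness, w.len ≤ w'.len)
include hmin

theorem LassoWitness.block_length_le_of_minimal [Fintype V] {c c' : ℕ}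
    (hblock : G.SuccessiveCP w.path c c') (hc' : c' ≤ w.len) : c' - c ≤ 4 * Fintype.card V := by
  by_contra h
  obtain ⟨w', hw'⟩ := w.exists_len_lt_of_long_block hblock hc' (by omega)
  exact absurd (hmin w') (by omega)

theorem LassoWitness.ne_of_minimal_of_le_start {c d : ℕ} (hcd : c < d) (hds : d ≤ w.start)
    (hcut : (G.Changepoint w.path c ∧ G.Changepoint w.path d) ∨
      ∀ n, c < n → n ≤ w.len → ¬ G.Changepoint w.path n) : w.path c ≠ w.path d := by
  intro heq
  have := w.start_le_fair
  have := w.fair_lt_len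
  obtain ⟨w', hw'⟩ := w.exists_len_lt_of_cut hcd (by omega) heq hcut (Or.inl hds) (by omega)
  exact absurd (hmin w') (by omega)

theorem LassoWitness.ne_of_minimal_of_start_le {c d : ℕ} (hsc : w.start ≤ c) (hcd : c < d)
    (hdlen : d < w.len) (hcut : (G.Changepoint w.path c ∧ G.Changepoint w.path d) ∨
      ∀ n, c < n → n ≤ w.len → ¬ G.Changepoint w.path n) : w.path c ≠ w.path d := by
  intro heq
  by_cases hf : c ≤ w.fair ∧ w.fair < d
  · obtain ⟨w', hw'⟩ := w.exists_len_eq_of_loop hf.1 hf.2 hdlen.le heq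
      (hcut.imp id fun hnone n hn hnd => hnone n hn (by omega))
    exact absurd (hmin w') (by omega)
  · obtain ⟨w', hw'⟩ := w.exists_len_lt_of_cut hcd hdlen heq hcut (Or.inr hsc) (by omega)
    exact absurd (hmin w') (by omega)

open Classical in
theorem LassoWitness.count_changepoint_le_of_minimal [Fintype V] :
    Nat.count (G.Changepoint w.path) w.len ≤ 2 * Fintype.card V := by
  rw [Nat.count_eq_card_filter_range, two_mul]
  refine (Finset.card_le_card (t := (Finset.Iic w.start).filter (G.Changepoint w.path) ∪
    (Finset.Ico w.start w.len).filter (G.Changepoint w.path)) fun x hx => ?_).trans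
    ((Finset.card_union_le _ _).trans (add_le_add ?_ ?_))
  · simp only [Finset.mem_filter, Finset.mem_range, Finset.mem_union, Finset.mem_Iic,
      Finset.mem_Ico] at hx ⊢
    rcases le_or_gt x w.start with hxs | hsx
    · exact Or.inl ⟨hxs, hx.2⟩
    · exact Or.inr ⟨⟨hsx.le, hx.1⟩, hx.2⟩
  · refine card_le_of_lt_imp_ne w.path fun x hx y hy hxy => ?_
    simp only [Finset.mem_filter, Finset.mem_Iic] at hx hy
    exact w.ne_of_minimal_of_le_start hmin hxy hy.1 (Or.inl ⟨hx.2, hy.2⟩)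
  · refine card_le_of_lt_imp_ne w.path fun x hx y hy hxy => ?_
    simp only [Finset.mem_filter, Finset.mem_Ico] at hx hy
    exact w.ne_of_minimal_of_start_le hmin hx.1.1 hxy hy.1.2 (Or.inl ⟨hx.2, hy.2⟩)

theorem LassoWitness.len_sub_le_of_minimal [Fintype V] {M : ℕ} (hM : G.Changepoint w.path M)
    (hMlen : M ≤ w.len) (hafter : ∀ p, M < p → p ≤ w.len → ¬ G.Changepoint w.path p) :
    w.len - M ≤ 2 * Fintype.card V := by
  rcases eq_or_lt_of_le hMlen with hMeq | hMlt
  · omega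
  have hMs : M ≤ w.start := by
    rcases w.loopCompatible with ⟨-, hlen⟩ | hnone
    · exact absurd hlen (hafter _ hMlt le_rfl)
    · by_contra h
      exact hnone M (by omega) hMlen hM
  have hcut : ∀ x, M ≤ x → ∀ p, x < p → p ≤ w.len → ¬ G.Changepoint w.path p :=
    fun x hx p hxp hp => hafter p (by omega) hp
  calc w.len - M ≤ (Finset.Icc M w.start).card + (Finset.Ico w.start w.len).card := by
        simp only [Nat.card_Icc, Nat.card_Ico]
        omega
    _ ≤ Fintype.card V + Fintype.card V := add_le_add
        (card_le_of_lt_imp_ne w.path fun x hx y hy hxy => w.ne_of_minimal_of_le_start hmin hxy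
          (Finset.mem_Icc.1 hy).2 (Or.inr (hcut x (Finset.mem_Icc.1 hx).1)))
        (card_le_of_lt_imp_ne w.path fun x hx y hy hxy => w.ne_of_minimal_of_start_le hmin
          (Finset.mem_Ico.1 hx).1 hxy (Finset.mem_Ico.1 hy).2
          (Or.inr (hcut x (hMs.trans (Finset.mem_Ico.1 hx).1))))
    _ = 2 * Fintype.card V := (two_mul _).symm

theorem LassoWitness.len_le_of_minimal [Fintype V] : w.len ≤ 10 * Fintype.card V ^ 2 := by
  classical
  set n := Fintype.card V
  set M := Nat.findGreatest (G.Changepoint w.path) w.len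
  have hM : G.Changepoint w.path M := Nat.findGreatest_spec (Nat.zero_le _) (changepoint_zero _)
  have hMlen : M ≤ w.len := Nat.findGreatest_le _
  have htail := w.len_sub_le_of_minimal hmin hM hMlen fun _ => Nat.findGreatest_is_greatest
  have hM' : M ≤ 2 * n * (4 * n) :=
    (le_count_mul_of_blocks_le (fun _ _ => w.block_length_le_of_minimal hmin) hM hMlen).trans
      (Nat.mul_le_mul_right _ ((Nat.count_monotone _ hMlen).trans
        (w.count_changepoint_le_of_minimal hmin)))
  have hn : n ≤ n ^ 2 := Nat.le_self_pow two_ne_zero n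
  have hlen : w.len ≤ M + 2 * n := by omega
  nlinarith

end Minimal

end CBG

/-- Pumping lemma for colored Büchi graphs with costs: if there is an initial
pumpable fair path, there is one of the ultimately periodic form π₀π₁^ω with
|π₀π₁| ∈ O(n²), where n is the number of vertices. -/
theorem pumpable_nonemptiness_small_witness :
    ∃ C : ℕ, ∀ (V : Type) [Fintype V] (G : CBG V),
      (∃ π, G.IsPath π ∧ G.Fair π ∧ G.Pumpable π) →
      ∃ π, G.IsPath π ∧ G.Fair π ∧ G.Pumpable π ∧
        ∃ s t, 0 < t ∧ s + t ≤ C * (Fintype.card V) ^ 2 ∧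
          ∀ n, s ≤ n → π (n + t) = π n := by
  refine ⟨10, fun V _ G ⟨π, hπ, hfair, hpump⟩ => ?_⟩
  have := CBG.LassoWitness.nonempty_of_pumpable hπ hfair hpump
  let w := Function.argmin (CBG.LassoWitness.len (G := G))
  have hmin : ∀ w' : G.LassoWitness, w.len ≤ w'.len :=
    fun w' => not_lt.1 (Function.not_lt_argmin _ w')
  obtain ⟨σ, hσ, hσfair, hσpump, s, t, ht, hst, hper⟩ := w.exists_lasso
  exact ⟨σ, hσ, hσfair, hσpump, s, t, ht, hst ▸ w.len_le_of_minimal hmin, hper⟩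
end
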